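/- arXiv:1602.03896 — 2 statements merged into one kernel-verified Lean document; each statement's English description precedes it below -/
import Mathlib

section
/- Let U be a bounded domain in ℂ and K ⊂ U a compact subset, and set R = U \ K. Then the space of restrictions to R of square-integrable holomorphic functions on U is a closed subspace of the Bergman space O_{L²}(R) (square-integrable holomorphic functions on R with the L² norm). -/
open MeasureTheory Complex Set

noncomputable section

section Defs

variable {E : Type*} [NormedAddCommGroup E] [NormedSpace ℂ E] [MeasureSpace E]
variable {ι : Type*} [Fintype ι]

/-- The Wirtinger derivative `∂φ/∂z̄` in the complex direction `v`. -/
def wderivV (v : E) (φ : E → ℂ) (z : E) : ℂ :=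
  (fderiv ℝ φ z v + Complex.I * fderiv ℝ φ z (Complex.I • v)) / 2

/-- Smooth test function compactly supported in `Ω`. -/
def IsTestOn (Ω : Set E) (φ : E → ℂ) : Prop :=
  ContDiff ℝ (⊤ : ℕ∞) φ ∧ HasCompactSupport φ ∧ tsupport φ ⊆ Ω

/-- Membership in the Bergman space of `U`. -/
def Bergman (U : Set E) (f : E → ℂ) : Prop :=
  DifferentiableOn ℂ f U ∧ MemLp f 2 (volume.restrict U)

/-- The `L²` inner product over `S`. -/
def L2InnerOn (S : Set E) (f g : E → ℂ) : ℂ :=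
  ∫ z in S, f z * (starRingEnd ℂ) (g z)

/-- `f = ∂̄u` in the sense of distributions on `Ω`, for `(0,1)`-forms with
coordinates indexed by `ι` and coordinate directions `e`. -/
def HasWeakDbar01 (e : ι → E) (Ω : Set E) (u : E → ℂ) (f : E → ι → ℂ) : Prop :=
  ∀ φ : E → ℂ, IsTestOn Ω φ → ∀ j : ι,
    ∫ z in Ω, f z j * φ z = - ∫ z in Ω, u z * wderivV (e j) φ z

/-- `∂̄f = 0` in the sense of distributions, for a `(0,1)`-form `f`. -/
def WeakDbarClosed01 (e : ι → E) (Ω : Set E) (f : E → ι → ℂ) : Prop :=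
  ∀ φ : E → ℂ, IsTestOn Ω φ → ∀ i j : ι,
    ∫ z in Ω, f z i * wderivV (e j) φ z = ∫ z in Ω, f z j * wderivV (e i) φ z

/-- `∂̄`-closed `L²` `(0,1)`-forms on `Ω`. -/
def ZL2 (e : ι → E) (Ω : Set E) (f : E → ι → ℂ) : Prop :=
  MemLp f 2 (volume.restrict Ω) ∧ WeakDbarClosed01 e Ω f

/-- `∂̄`-exact (from `L²` potentials) `(0,1)`-forms on `Ω`. -/
def BL2 (e : ι → E) (Ω : Set E) (f : E → ι → ℂ) : Prop :=
  ∃ u : E → ℂ, MemLp u 2 (volume.restrict Ω) ∧ HasWeakDbar01 e Ω u f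

/-- `H^{0,1}_{L²}(Ω)` is Hausdorff: the exact forms are closed among the closed forms,
formulated via `L²` approximation. -/
def H01Hausdorff (e : ι → E) (Ω : Set E) : Prop :=
  ∀ f : E → ι → ℂ, ZL2 e Ω f →
    (∀ ε : ℝ, 0 < ε → ∃ g : E → ι → ℂ, ZL2 e Ω g ∧ BL2 e Ω g ∧
      eLpNorm (f - g) 2 (volume.restrict Ω) < ENNReal.ofReal ε) →
    BL2 e Ω f

/-- `H^{0,1}_{L²}(Ω) = 0`. -/
def H01Zero (e : ι → E) (Ω : Set E) : Prop :=
  ∀ f : E → ι → ℂ, ZL2 e Ω f → BL2 e Ω f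

/-- `f = ∂̄u` distributionally, for `(p,q+1)`-forms given by coefficient arrays. -/
def WeakDbarPQ (e : ι → E) (Ω : Set E) {p q : ℕ}
    (u : E → (Fin p → ι) → (Fin q → ι) → ℂ)
    (f : E → (Fin p → ι) → (Fin (q+1) → ι) → ℂ) : Prop :=
  ∀ φ : E → ℂ, IsTestOn Ω φ → ∀ (A : Fin p → ι) (K : Fin (q+1) → ι),
    ∫ z in Ω, f z A K * φ z =
      - ∑ l : Fin (q+1), (-1 : ℂ) ^ (l : ℕ) *
          ∫ z in Ω, u z A (K ∘ l.succAbove) * wderivV (e (K l)) φ z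

/-- `∂̄f = 0` distributionally for a `(p,q+1)`-form `f`. -/
def WeakClosedPQ (e : ι → E) (Ω : Set E) {p q : ℕ}
    (f : E → (Fin p → ι) → (Fin (q+1) → ι) → ℂ) : Prop :=
  ∀ φ : E → ℂ, IsTestOn Ω φ → ∀ (A : Fin p → ι) (M : Fin (q+2) → ι),
    ∑ l : Fin (q+2), (-1 : ℂ) ^ (l : ℕ) *
      ∫ z in Ω, f z A (M ∘ l.succAbove) * wderivV (e (M l)) φ z = 0

/-- `∂̄`-closed `L²` `(p,q+1)`-forms. -/
def ZPQ (e : ι → E) (Ω : Set E) {p q : ℕ}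
    (f : E → (Fin p → ι) → (Fin (q+1) → ι) → ℂ) : Prop :=
  MemLp f 2 (volume.restrict Ω) ∧ WeakClosedPQ e Ω f

/-- `∂̄`-exact `L²` `(p,q+1)`-forms. -/
def BPQ (e : ι → E) (Ω : Set E) {p q : ℕ}
    (f : E → (Fin p → ι) → (Fin (q+1) → ι) → ℂ) : Prop :=
  ∃ u : E → (Fin p → ι) → (Fin q → ι) → ℂ,
    MemLp u 2 (volume.restrict Ω) ∧ WeakDbarPQ e Ω u f

/-- `H^{p,q+1}_{L²}(Ω)` is Hausdorff. -/
def HPQHausdorff (e : ι → E) (Ω : Set E) (p q : ℕ) : Prop :=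
  ∀ f : E → (Fin p → ι) → (Fin (q+1) → ι) → ℂ, ZPQ e Ω f →
    (∀ ε : ℝ, 0 < ε → ∃ g : E → (Fin p → ι) → (Fin (q+1) → ι) → ℂ,
      ZPQ e Ω g ∧ BPQ e Ω g ∧
      eLpNorm (f - g) 2 (volume.restrict Ω) < ENNReal.ofReal ε) →
    BPQ e Ω f

/-- `H^{p,q+1}_{L²}(Ω) = 0`. -/
def HPQZero (e : ι → E) (Ω : Set E) (p q : ℕ) : Prop :=
  ∀ f : E → (Fin p → ι) → (Fin (q+1) → ι) → ℂ, ZPQ e Ω f → BPQ e Ω f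

/-- `f` is in the Sobolev space `W¹(Ω)`: it is in `L²(Ω)` and all its first-order weak
directional derivatives on `Ω` exist in `L²(Ω)`. -/
def MemW1On (Ω : Set E) (f : E → ℂ) : Prop :=
  MemLp f 2 (volume.restrict Ω) ∧
  ∀ v : E, ∃ g : E → ℂ, MemLp g 2 (volume.restrict Ω) ∧
    ∀ φ : E → ℂ, IsTestOn Ω φ →
      ∫ z in Ω, f z * fderiv ℝ φ z v = - ∫ z in Ω, g z * φ z

/-- `g` is the weak Wirtinger derivative `∂f/∂z̄` of `f` in direction `v`, on `Ω`. -/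
def HasWeakWirtOn (Ω : Set E) (v : E) (f g : E → ℂ) : Prop :=
  ∀ φ : E → ℂ, IsTestOn Ω φ →
    ∫ z in Ω, g z * φ z = - ∫ z in Ω, f z * wderivV v φ z

/-- `H^{0,q+1}_{W¹}(Ω) = 0` : every `∂̄`-closed `(0,q+1)`-form with `W¹(Ω)` coefficients is
`∂̄` of a `(0,q)`-form with `W¹(Ω)` coefficients. -/
def W1DbarSolvable (e : ι → E) (Ω : Set E) (q : ℕ) : Prop :=
  ∀ f : E → (Fin (q+1) → ι) → ℂ,
    (∀ A, MemW1On Ω (fun z => f z A)) →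
    (∃ g : ι → (Fin (q+1) → ι) → E → ℂ,
      (∀ j A, MemLp (g j A) 2 (volume.restrict Ω) ∧
        HasWeakWirtOn Ω (e j) (fun z => f z A) (g j A)) ∧
      ∀ M : Fin (q+2) → ι, ∀ᵐ z ∂(volume.restrict Ω),
        ∑ l : Fin (q+2), (-1 : ℂ) ^ (l : ℕ) * g (M l) (M ∘ l.succAbove) z = 0) →
    ∃ u : E → (Fin q → ι) → ℂ, (∀ A, MemW1On Ω (fun z => u z A)) ∧
      ∃ h : ι → (Fin q → ι) → E → ℂ,
        (∀ j A, MemLp (h j A) 2 (volume.restrict Ω) ∧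
          HasWeakWirtOn Ω (e j) (fun z => u z A) (h j A)) ∧
        ∀ A : Fin (q+1) → ι, ∀ᵐ z ∂(volume.restrict Ω),
          ∑ l : Fin (q+1), (-1 : ℂ) ^ (l : ℕ) * h (A l) (A ∘ l.succAbove) z = f z A

/-- Solvability `H^{0,q+1}_{W¹}(K) = 0` for a compact set `K`, in terms of forms with
coefficients in `W¹(ℂⁿ)` with the `∂̄`-equations holding a.e. on `K`. -/
def W1DbarSolvableOnCompact (e : ι → E) (K : Set E) (q : ℕ) : Prop :=
  ∀ f : E → (Fin (q+1) → ι) → ℂ,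
    (∀ A, MemW1On Set.univ (fun z => f z A)) →
    (∃ g : ι → (Fin (q+1) → ι) → E → ℂ,
      (∀ j A, MemLp (g j A) 2 (volume.restrict Set.univ) ∧
        HasWeakWirtOn Set.univ (e j) (fun z => f z A) (g j A)) ∧
      ∀ M : Fin (q+2) → ι, ∀ᵐ z ∂(volume.restrict K),
        ∑ l : Fin (q+2), (-1 : ℂ) ^ (l : ℕ) * g (M l) (M ∘ l.succAbove) z = 0) →
    ∃ u : E → (Fin q → ι) → ℂ, (∀ A, MemW1On Set.univ (fun z => u z A)) ∧
      ∃ h : ι → (Fin q → ι) → E → ℂ,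
        (∀ j A, MemLp (h j A) 2 (volume.restrict Set.univ) ∧
          HasWeakWirtOn Set.univ (e j) (fun z => u z A) (h j A)) ∧
        ∀ A : Fin (q+1) → ι, ∀ᵐ z ∂(volume.restrict K),
          ∑ l : Fin (q+1), (-1 : ℂ) ^ (l : ℕ) * h (A l) (A ∘ l.succAbove) z = f z A

/-- No strictly larger domain admits extension of all holomorphic functions
(the domain-of-holomorphy formulation of pseudoconvexity). -/
def NoHolomorphicExtension (D : Set E) : Prop :=
  ¬ ∃ D' : Set E, IsOpen D' ∧ IsConnected D' ∧ D ⊂ D' ∧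
      ∀ f : E → ℂ, DifferentiableOn ℂ f D →
        ∃ g : E → ℂ, DifferentiableOn ℂ g D' ∧ Set.EqOn f g D

end Defs

section LipDef

variable {F : Type*} [NormedAddCommGroup F] [NormedSpace ℝ F]

/-- A bounded Lipschitz domain: a bounded domain whose boundary is locally the graph
of a Lipschitz function. -/
def IsLipschitzDomain (V : Set F) : Prop :=
  IsOpen V ∧ IsConnected V ∧ Bornology.IsBounded V ∧
  ∀ p ∈ frontier V, ∃ v : F, ∃ ℓ : F →L[ℝ] ℝ, ℓ v = 1 ∧
    ∃ c : NNReal, ∃ f : F → ℝ, LipschitzWith c f ∧ ∃ r : ℝ, 0 < r ∧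
      ∀ x ∈ Metric.ball p r, (x ∈ V ↔ f (x - ℓ x • v) < ℓ x)

end LipDef

/-- The standard complex coordinate directions of `ℂⁿ`. -/
def stdE (n : ℕ) : Fin n → (Fin n → ℂ) := fun j => Pi.single j 1

section BergmanHelpers

open Metric Real Filter

lemma circle_mean {f : ℂ → ℂ} {c : ℂ} {s : ℝ} (hs : 0 < s)
    (hf : DifferentiableOn ℂ f (Metric.closedBall c s)) :
    ‖f c‖ ≤ (2 * π)⁻¹ * ∫ θ in (0:ℝ)..(2*π), ‖f (circleMap c s θ)‖ := by
  have h := hf.circleIntegral_sub_inv_smul (Metric.mem_ball_self hs)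
  have h2 : (∮ z in C(c, s), (z - c)⁻¹ • f z)
      = ∫ θ in (0:ℝ)..(2*π), I • f (circleMap c s θ) := by
    rw [circleIntegral]
    refine intervalIntegral.integral_congr fun θ _ => ?_
    rw [deriv_circleMap, circleMap_sub_center, smul_smul]
    congr 1
    have hne : circleMap 0 s θ ≠ 0 := circleMap_ne_center hs.ne'
    field_simp
  rw [h2, intervalIntegral.integral_smul] at h
  have h3 : (∫ θ in (0:ℝ)..(2*π), f (circleMap c s θ)) = (2 * π : ℂ) * f c := by
    have hI : (I : ℂ) ≠ 0 := I_ne_zero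
    refine mul_left_cancel₀ hI ?_
    rw [← smul_eq_mul, h]
    push_cast
    simp only [smul_eq_mul]
    ring
  have h4 : ‖f c‖ = (2 * π)⁻¹ * ‖∫ θ in (0:ℝ)..(2*π), f (circleMap c s θ)‖ := by
    rw [h3, norm_mul]
    have : ‖(2 * π : ℂ)‖ = 2 * π := by
      rw [show ((2 * π : ℂ)) = ((2 * π : ℝ) : ℂ) by push_cast; ring, Complex.norm_real,
        Real.norm_of_nonneg (by positivity)]
    rw [this]
    field_simp
  rw [h4]
  have h5 : (0:ℝ) ≤ (2 * π)⁻¹ := by positivity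
  have := intervalIntegral.norm_integral_le_integral_norm
    (f := fun θ => f (circleMap c s θ)) (a := 0) (b := 2*π) (μ := volume) (by positivity)
  exact mul_le_mul_of_nonneg_left this h5

lemma ball_mean {f : ℂ → ℂ} {c : ℂ} {r : ℝ} (hr : 0 < r)
    (hf : DifferentiableOn ℂ f (Metric.closedBall c r)) :
    π * r ^ 2 * ‖f c‖ ≤ ∫ z in Metric.ball c r, ‖f z‖ := by
  have hcont : ContinuousOn (fun z => ‖f z‖) (Metric.closedBall c r) :=
    hf.continuousOn.norm
  -- rewrite the ball integral via polar coordinates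
  set Q : Set (ℝ × ℝ) := Ioo 0 r ×ˢ Ioo (-π) π with hQ
  set H : ℝ × ℝ → ℝ := fun p => p.1 * ‖f (c + Complex.polarCoord.symm p)‖ with hH
  have hsymm_cont : Continuous (fun p : ℝ × ℝ => (Complex.polarCoord.symm p : ℂ)) := by
    have : (fun p : ℝ × ℝ => (Complex.polarCoord.symm p : ℂ))
        = fun p => (p.1 : ℂ) * ((Real.cos p.2 : ℂ) + (Real.sin p.2 : ℂ) * Complex.I) := by
      funext p; rw [Complex.polarCoord_symm_apply]
    rw [this]; fun_prop
  have habs : ∀ p : ℝ × ℝ, ‖(Complex.polarCoord.symm p)‖ = |p.1| :=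
    Complex.norm_polarCoord_symm
  have hmaps : MapsTo (fun p : ℝ × ℝ => c + Complex.polarCoord.symm p) (closure Q)
      (Metric.closedBall c r) := by
    intro p hp
    have hp1 : p ∈ Icc 0 r ×ˢ Icc (-π) π := by
      have h1 := closure_prod_eq (s := Ioo (0:ℝ) r) (t := Ioo (-π) π) ▸ hp
      rw [closure_Ioo hr.ne, closure_Ioo (by linarith [Real.pi_pos] : -π ≠ π)] at h1
      exact h1
    simp only [Metric.mem_closedBall, dist_eq_norm]
    have : ‖(c + Complex.polarCoord.symm p) - c‖ = |p.1| := by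
      rw [add_sub_cancel_left]
      simpa using habs p
    rw [this]
    rw [_root_.abs_of_nonneg hp1.1.1]
    exact hp1.1.2
  have hHcont : ContinuousOn H (closure Q) := by
    apply ContinuousOn.mul (continuous_fst.continuousOn)
    exact (hcont.comp ((continuous_const.add hsymm_cont).continuousOn) hmaps)
  have hclosure : closure Q = Icc 0 r ×ˢ Icc (-π) π := by
    rw [hQ, closure_prod_eq, closure_Ioo hr.ne, closure_Ioo (by linarith [Real.pi_pos] : -π ≠ π)]
  have hQmeas : MeasurableSet Q := (measurableSet_Ioo.prod measurableSet_Ioo)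
  have hHint : IntegrableOn H Q := by
    refine (hHcont.integrableOn_compact ?_).mono_set subset_closure
    rw [hclosure]; exact isCompact_Icc.prod isCompact_Icc
  have hcirc : ∀ s θ : ℝ, c + Complex.polarCoord.symm (s, θ) = circleMap c s θ := by
    intro s θ
    rw [Complex.polarCoord_symm_apply]
    simp only [circleMap]
    rw [Complex.exp_mul_I]
    push_cast
    ring
  -- the two-variable integral identity
  have key : (∫ z in Metric.ball c r, ‖f z‖)
      = ∫ s in Ioo (0:ℝ) r, ∫ θ in Ioo (-π) π, H (s, θ) := by
    have e1 : (∫ z in Metric.ball c r, ‖f z‖)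
        = ∫ z, (Metric.ball (0:ℂ) r).indicator (fun w => ‖f (c + w)‖) z := by
      rw [← integral_indicator measurableSet_ball]
      rw [← integral_add_left_eq_self (μ := volume)
        ((Metric.ball (c:ℂ) r).indicator (fun z => ‖f z‖)) c]
      congr 1
      funext z
      by_cases hz : z ∈ Metric.ball (0:ℂ) r
      · rw [indicator_of_mem hz, indicator_of_mem]
        simpa [Metric.mem_ball, dist_eq_norm] using hz
      · rw [indicator_of_notMem hz, indicator_of_notMem]
        simpa [Metric.mem_ball, dist_eq_norm] using hz
    have e2 : (∫ z, (Metric.ball (0:ℂ) r).indicator (fun w => ‖f (c + w)‖) z)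
        = ∫ p in polarCoord.target, p.1 •
            (Metric.ball (0:ℂ) r).indicator (fun w => ‖f (c + w)‖) (Complex.polarCoord.symm p) :=
      (Complex.integral_comp_polarCoord_symm _).symm
    have e3 : (∫ p in polarCoord.target, p.1 •
            (Metric.ball (0:ℂ) r).indicator (fun w => ‖f (c + w)‖) (Complex.polarCoord.symm p))
        = ∫ p in polarCoord.target, Q.indicator H p := by
      refine setIntegral_congr_fun polarCoord.open_target.measurableSet fun p hp => ?_
      have hp1 : 0 < p.1 := hp.1
      have habsp : ‖(Complex.polarCoord.symm p)‖ = p.1 := by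
        rw [habs p, _root_.abs_of_pos hp1]
      have hmem_iff : (Complex.polarCoord.symm p : ℂ) ∈ Metric.ball (0:ℂ) r ↔ p.1 < r := by
        rw [Metric.mem_ball, Complex.dist_eq, sub_zero, habsp]
      by_cases hlt : p.1 < r
      · rw [Set.indicator_of_mem (hmem_iff.mpr hlt),
          Set.indicator_of_mem (show p ∈ Q from ⟨⟨hp1, hlt⟩, hp.2⟩)]
        simp [hH, smul_eq_mul]
      · rw [Set.indicator_of_notMem (fun hmem => hlt (hmem_iff.mp hmem)),
          Set.indicator_of_notMem (fun hmem : p ∈ Q => hlt hmem.1.2)]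
        simp
    have e4 : (∫ p in polarCoord.target, Q.indicator H p) = ∫ p in Q, H p := by
      rw [setIntegral_indicator hQmeas]
      congr 1
      rw [inter_eq_self_of_subset_right]
      rw [hQ, polarCoord_target]
      exact prod_mono (Ioo_subset_Ioi_self) subset_rfl
    have e5 : (∫ p in Q, H p) = ∫ s in Ioo (0:ℝ) r, ∫ θ in Ioo (-π) π, H (s, θ) := by
      rw [hQ] at hHint ⊢
      rw [show (volume : Measure (ℝ × ℝ)).restrict (Ioo (0:ℝ) r ×ˢ Ioo (-π) π)
        = (volume.restrict (Ioo (0:ℝ) r)).prod (volume.restrict (Ioo (-π) π)) by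
          rw [Measure.prod_restrict, ← Measure.volume_eq_prod]]
      refine MeasureTheory.integral_prod _ ?_
      rw [Measure.prod_restrict, ← Measure.volume_eq_prod]
      exact hHint
    rw [e1, e2, e3, e4, e5]
  rw [key]
  -- lower-bound the inner integral
  have inner_bd : ∀ s ∈ Ioo (0:ℝ) r, s * (2 * π * ‖f c‖) ≤ ∫ θ in Ioo (-π) π, H (s, θ) := by
    intro s hs
    have hfs : DifferentiableOn ℂ f (Metric.closedBall c s) :=
      hf.mono (Metric.closedBall_subset_closedBall hs.2.le)
    have hcm := circle_mean hs.1 hfs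
    have hper : Function.Periodic (fun θ : ℝ => ‖f (circleMap c s θ)‖) (2 * π) :=
      (periodic_circleMap c s).comp fun z => ‖f z‖
    have hIoo : (∫ θ in Ioo (-π) π, H (s, θ))
        = s * ∫ θ in (0:ℝ)..(2*π), ‖f (circleMap c s θ)‖ := by
      have : (∫ θ in Ioo (-π) π, H (s, θ)) = s * ∫ θ in Ioo (-π) π, ‖f (circleMap c s θ)‖ := by
        rw [← integral_const_mul]
        refine setIntegral_congr_fun measurableSet_Ioo fun θ _ => ?_
        show (s, θ).1 * ‖f (c + Complex.polarCoord.symm ((s, θ) : ℝ × ℝ))‖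
            = s * ‖f (circleMap c s θ)‖
        rw [hcirc]
      rw [this]
      congr 1
      rw [← integral_Ioc_eq_integral_Ioo, ← intervalIntegral.integral_of_le (by linarith [Real.pi_pos])]
      have := hper.intervalIntegral_add_eq (-π) 0
      rw [show -π + 2*π = π by ring, show (0:ℝ) + 2*π = 2*π by ring] at this
      exact this
    rw [hIoo]
    have h2π : (0:ℝ) < 2 * π := by positivity
    calc s * (2 * π * ‖f c‖) ≤ s * (2 * π * ((2 * π)⁻¹ * ∫ θ in (0:ℝ)..(2*π), ‖f (circleMap c s θ)‖)) := by
          have := mul_le_mul_of_nonneg_left hcm (le_of_lt h2π)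
          exact mul_le_mul_of_nonneg_left (by nlinarith [hcm]) hs.1.le
      _ = s * ∫ θ in (0:ℝ)..(2*π), ‖f (circleMap c s θ)‖ := by
          field_simp
  -- integrate the lower bound
  have houter_int : IntegrableOn (fun s => ∫ θ in Ioo (-π) π, H (s, θ)) (Ioo (0:ℝ) r) := by
    rw [hQ] at hHint
    have hHint' : Integrable H
        ((volume.restrict (Ioo (0:ℝ) r)).prod (volume.restrict (Ioo (-π) π))) := by
      rw [Measure.prod_restrict, ← Measure.volume_eq_prod]
      exact hHint
    exact hHint'.integral_prod_left
  have hlin_int : IntegrableOn (fun s : ℝ => s * (2 * π * ‖f c‖)) (Ioo (0:ℝ) r) :=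
    (((continuous_id.mul continuous_const).continuousOn).integrableOn_compact
      (isCompact_Icc (a := (0:ℝ)) (b := r))).mono_set Ioo_subset_Icc_self
  have hmono := setIntegral_mono_on hlin_int houter_int measurableSet_Ioo inner_bd
  refine le_trans (le_of_eq ?_) hmono
  rw [← integral_Ioc_eq_integral_Ioo, ← intervalIntegral.integral_of_le hr.le]
  rw [intervalIntegral.integral_mul_const, integral_id]
  ring

lemma point_bound {f : ℂ → ℂ} {c : ℂ} {r : ℝ} (hr : 0 < r) {S : Set ℂ} (hS : MeasurableSet S)
    (hsub : Metric.ball c r ⊆ S) (hvol : volume S < ⊤)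
    (hf : DifferentiableOn ℂ f (Metric.closedBall c r))
    (hfS : MemLp f 2 (volume.restrict S)) :
    ‖f c‖ ≤ (π * r ^ 2)⁻¹ *
      (eLpNorm f 2 (volume.restrict S) * (volume S) ^ (1/2 : ℝ)).toReal := by
  haveI : IsFiniteMeasure (volume.restrict S) :=
    ⟨by rwa [Measure.restrict_apply_univ]⟩
  have hfi : IntegrableOn f S := hfS.integrable one_le_two
  have h1 : π * r ^ 2 * ‖f c‖ ≤ ∫ z in Metric.ball c r, ‖f z‖ := ball_mean hr hf
  have h2 : (∫ z in Metric.ball c r, ‖f z‖) ≤ ∫ z in S, ‖f z‖ := by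
    apply setIntegral_mono_set hfi.norm (Filter.Eventually.of_forall fun z => norm_nonneg _)
    exact HasSubset.Subset.eventuallyLE hsub
  have h3 : (∫ z in S, ‖f z‖) = (eLpNorm f 1 (volume.restrict S)).toReal := by
    rw [integral_norm_eq_lintegral_enorm hfi.aestronglyMeasurable,
      eLpNorm_one_eq_lintegral_enorm]
  have h4 : eLpNorm f 1 (volume.restrict S)
      ≤ eLpNorm f 2 (volume.restrict S) * (volume S) ^ (1/2 : ℝ) := by
    have := eLpNorm_le_eLpNorm_mul_rpow_measure_univ (p := 1) (q := 2)
      one_le_two hfS.aestronglyMeasurable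
    rw [Measure.restrict_apply_univ] at this
    convert this using 3
    norm_num
  have hfin : eLpNorm f 2 (volume.restrict S) * (volume S) ^ (1/2 : ℝ) ≠ ⊤ :=
    ENNReal.mul_ne_top hfS.2.ne (by
      exact (ENNReal.rpow_lt_top_of_nonneg (by norm_num) hvol.ne).ne)
  have h5 : (eLpNorm f 1 (volume.restrict S)).toReal
      ≤ (eLpNorm f 2 (volume.restrict S) * (volume S) ^ (1/2 : ℝ)).toReal :=
    ENNReal.toReal_mono hfin h4
  have hπ : (0:ℝ) < π * r ^ 2 := by positivity
  rw [inv_mul_eq_div, le_div_iff₀ hπ]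
  calc ‖f c‖ * (π * r ^ 2) = π * r ^ 2 * ‖f c‖ := by ring
    _ ≤ _ := le_trans h1 (le_trans h2 (h3 ▸ h5))

lemma eLpNorm_restrict_union_le (f : ℂ → ℂ) (A B : Set ℂ) :
    eLpNorm f 2 (volume.restrict (A ∪ B))
      ≤ eLpNorm f 2 (volume.restrict A) + eLpNorm f 2 (volume.restrict B) := by
  refine (eLpNorm_mono_measure f (Measure.restrict_union_le A B)).trans ?_
  have h2 : (2 : ENNReal) ≠ 0 := two_ne_zero
  have h2' : (2 : ENNReal) ≠ ⊤ := ENNReal.ofNat_ne_top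
  rw [eLpNorm_eq_lintegral_rpow_enorm_toReal h2 h2', eLpNorm_eq_lintegral_rpow_enorm_toReal h2 h2',
    eLpNorm_eq_lintegral_rpow_enorm_toReal h2 h2', lintegral_add_measure]
  have := ENNReal.rpow_add_le_add_rpow
    (∫⁻ x, ‖f x‖ₑ ^ (2 : ENNReal).toReal ∂volume.restrict A)
    (∫⁻ x, ‖f x‖ₑ ^ (2 : ENNReal).toReal ∂volume.restrict B)
    (p := 1 / (2 : ENNReal).toReal) (by norm_num) (by norm_num)
  exact this

end BergmanHelpers

open Real Filter

/-- For a bounded domain `U ⊆ ℂ` and a compact `K ⊆ U`, with `R = U \ K`,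
the space of restrictions to `R` of square-integrable holomorphic functions on `U` is a closed
subspace of the Bergman space `O_{L²}(R)`: any `g ∈ O_{L²}(R)` which can be `L²(R)`-approximated
arbitrarily well by restrictions of members of `O_{L²}(U)` is itself such a restriction. -/
theorem statement0 (U : Set ℂ) (hUopen : IsOpen U) (hUconn : IsConnected U)
    (hUbdd : Bornology.IsBounded U) (K : Set ℂ) (hK : IsCompact K) (hKU : K ⊆ U)
    (g : ℂ → ℂ) (hg : Bergman (U \ K) g)
    (happrox : ∀ ε : ℝ, 0 < ε → ∃ F : ℂ → ℂ, Bergman U F ∧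
      eLpNorm (g - F) 2 (volume.restrict (U \ K)) < ENNReal.ofReal ε) :
    ∃ F : ℂ → ℂ, Bergman U F ∧ Set.EqOn g F (U \ K) := by
  classical
  rcases K.eq_empty_or_nonempty with rfl | hKne
  · rw [Set.diff_empty] at hg ⊢
    exact ⟨g, hg, fun z _ => rfl⟩
  set R : Set ℂ := U \ K with hRdef
  have hKcl : IsClosed K := hK.isClosed
  have hRopen : IsOpen R := hUopen.sdiff hKcl
  have hRU : R ⊆ U := Set.diff_subset
  have hvolU : volume U < ⊤ := hUbdd.measure_lt_top
  have hvolR : volume R < ⊤ := lt_of_le_of_lt (measure_mono hRU) hvolU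
  have hvolK : volume K < ⊤ := lt_of_le_of_lt (measure_mono hKU) hvolU
  -- geometry of a collar around K
  obtain ⟨δ, hδpos, hδ⟩ := hK.exists_thickening_subset_open hUopen hKU
  set r : ℝ := δ / 4 with hrdef
  have hrpos : 0 < r := by positivity
  have hcth : Metric.cthickening (3 * r) K ⊆ U :=
    (Metric.cthickening_subset_thickening' hδpos (by rw [hrdef]; linarith) K).trans hδ
  set V : Set ℂ := Metric.thickening (2 * r) K with hVdef
  have hVU : closure V ⊆ U := by
    refine (Metric.closure_thickening_subset_cthickening _ _).trans ?_
    exact (Metric.cthickening_mono (by linarith) K).trans hcth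
  have hVbdd : Bornology.IsBounded V := hUbdd.subset ((subset_closure).trans hVU)
  have hKV : K ⊆ V := Metric.self_subset_thickening (by positivity) K
  have hfr : ∀ x ∈ frontier V, Metric.ball x r ⊆ R := by
    intro x hx y hy
    have hxe : Metric.infEDist x K = ENNReal.ofReal (2 * r) :=
      Metric.frontier_thickening_subset K hx
    have hxd : Metric.infDist x K = 2 * r := by
      rw [Metric.infDist, hxe, ENNReal.toReal_ofReal (by positivity : (0:ℝ) ≤ 2 * r)]
    have hyx : dist y x < r := Metric.mem_ball.mp hy
    constructor
    · refine hcth ?_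
      have hlt : Metric.infDist y K < 3 * r := by
        have h1 : Metric.infDist y K ≤ Metric.infDist x K + dist y x :=
          Metric.infDist_le_infDist_add_dist
        rw [hxd] at h1; linarith
      obtain ⟨k, hk, hdk⟩ := (Metric.infDist_lt_iff hKne).mp hlt
      exact Metric.mem_cthickening_of_dist_le y k (3 * r) K hk hdk.le
    · intro hyK
      have := Metric.infDist_le_dist_of_mem (x := x) hyK
      rw [hxd, dist_comm] at this
      linarith
  -- pointwise bound on K by the L² norm on R
  set c1 : ℝ := (π * (r / 2) ^ 2)⁻¹ * ((volume R) ^ (1/2 : ℝ)).toReal with hc1def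
  have hc1_nonneg : 0 ≤ c1 := by
    apply mul_nonneg
    · positivity
    · exact ENNReal.toReal_nonneg
  have supK : ∀ F : ℂ → ℂ, DifferentiableOn ℂ F U → MemLp F 2 (volume.restrict R) →
      ∀ w ∈ K, ‖F w‖ ≤ c1 * (eLpNorm F 2 (volume.restrict R)).toReal := by
    intro F hFd hFm w hw
    have hfront : ∀ z ∈ frontier V, ‖F z‖ ≤ c1 * (eLpNorm F 2 (volume.restrict R)).toReal := by
      intro z hz
      have hball := hfr z hz
      have hpb := point_bound (half_pos hrpos) hRopen.measurableSet
        ((Metric.ball_subset_ball (by linarith)).trans hball) hvolR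
        (hFd.mono (((Metric.closedBall_subset_ball (by linarith)).trans hball).trans hRU)) hFm
      rw [ENNReal.toReal_mul] at hpb
      refine hpb.trans (le_of_eq ?_)
      rw [hc1def]; ring
    exact Complex.norm_le_of_forall_mem_frontier_norm_le hVbdd
      ⟨hFd.mono (subset_closure.trans hVU), hFd.continuousOn.mono hVU⟩ hfront
      (subset_closure (hKV hw))
  -- master estimate : L²(U) controlled by L²(R)
  set CC : ENNReal := 1 + (volume K) ^ (1/2 : ℝ) * ENNReal.ofReal c1 with hCCdef
  have hCCne : CC ≠ ⊤ := by
    rw [hCCdef]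
    refine ENNReal.add_ne_top.mpr ⟨ENNReal.one_ne_top, ENNReal.mul_ne_top ?_ ENNReal.ofReal_ne_top⟩
    exact (ENNReal.rpow_lt_top_of_nonneg (by norm_num) hvolK.ne).ne
  have hURK : U ⊆ R ∪ K := by
    intro z hz
    by_cases hzK : z ∈ K
    · exact Or.inr hzK
    · exact Or.inl ⟨hz, hzK⟩
  have master : ∀ F : ℂ → ℂ, DifferentiableOn ℂ F U → MemLp F 2 (volume.restrict U) →
      eLpNorm F 2 (volume.restrict U) ≤ CC * eLpNorm F 2 (volume.restrict R) := by
    intro F hFd hFm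
    have hFmR : MemLp F 2 (volume.restrict R) :=
      hFm.mono_measure (Measure.restrict_mono hRU le_rfl)
    have hsplit : eLpNorm F 2 (volume.restrict U)
        ≤ eLpNorm F 2 (volume.restrict R) + eLpNorm F 2 (volume.restrict K) :=
      (eLpNorm_mono_measure F (Measure.restrict_mono hURK le_rfl)).trans
        (eLpNorm_restrict_union_le F R K)
    have hKbd : eLpNorm F 2 (volume.restrict K)
        ≤ (volume K) ^ (1/2 : ℝ)
          * ENNReal.ofReal (c1 * (eLpNorm F 2 (volume.restrict R)).toReal) := by
      have hb := eLpNorm_le_of_ae_bound (μ := volume.restrict K) (p := 2) (f := F)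
        (C := c1 * (eLpNorm F 2 (volume.restrict R)).toReal)
        ((ae_restrict_iff' hKcl.measurableSet).mpr
          (Filter.Eventually.of_forall fun w hw => supK F hFd hFmR w hw))
      rw [Measure.restrict_apply_univ] at hb
      refine hb.trans (le_of_eq ?_)
      congr 1
      norm_num
    have hofreal : ENNReal.ofReal (c1 * (eLpNorm F 2 (volume.restrict R)).toReal)
        ≤ ENNReal.ofReal c1 * eLpNorm F 2 (volume.restrict R) := by
      rw [ENNReal.ofReal_mul hc1_nonneg]
      exact mul_le_mul_right ENNReal.ofReal_toReal_le _
    calc eLpNorm F 2 (volume.restrict U)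
        ≤ eLpNorm F 2 (volume.restrict R) + eLpNorm F 2 (volume.restrict K) := hsplit
      _ ≤ eLpNorm F 2 (volume.restrict R)
          + (volume K) ^ (1/2 : ℝ) * (ENNReal.ofReal c1 * eLpNorm F 2 (volume.restrict R)) :=
          add_le_add_right (hKbd.trans (mul_le_mul_right hofreal _)) _
      _ = CC * eLpNorm F 2 (volume.restrict R) := by rw [hCCdef]; ring
  -- uniform bound on arbitrary compact subsets of U
  have compact_bound : ∀ L : Set ℂ, IsCompact L → L ⊆ U → ∃ C : ℝ, 0 ≤ C ∧
      ∀ F : ℂ → ℂ, DifferentiableOn ℂ F U → MemLp F 2 (volume.restrict U) →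
        ∀ w ∈ L, ‖F w‖ ≤ C * (eLpNorm F 2 (volume.restrict R)).toReal := by
    intro L hL hLU
    obtain ⟨ρ, hρpos, hρ⟩ := hL.exists_thickening_subset_open hUopen hLU
    refine ⟨(π * (ρ / 2) ^ 2)⁻¹ * (CC.toReal * ((volume U) ^ (1/2 : ℝ)).toReal),
      by positivity, ?_⟩
    intro F hFd hFm w hw
    have hcb : Metric.closedBall w (ρ / 2) ⊆ U := by
      intro y hy
      refine hρ (Metric.mem_thickening_iff.mpr ⟨w, hw, ?_⟩)
      calc dist y w ≤ ρ / 2 := Metric.mem_closedBall.mp hy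
        _ < ρ := by linarith
    have hpb := point_bound (by positivity : (0:ℝ) < ρ / 2) hUopen.measurableSet
      (Metric.ball_subset_closedBall.trans hcb) hvolU (hFd.mono hcb) hFm
    have hm := master F hFd hFm
    have hle : eLpNorm F 2 (volume.restrict U) * (volume U) ^ (1/2 : ℝ)
        ≤ CC * eLpNorm F 2 (volume.restrict R) * (volume U) ^ (1/2 : ℝ) :=
      mul_le_mul_left hm _
    have hRne : eLpNorm F 2 (volume.restrict R) ≠ ⊤ :=
      (hFm.mono_measure (Measure.restrict_mono hRU le_rfl)).2.ne
    have hfin : CC * eLpNorm F 2 (volume.restrict R) * (volume U) ^ (1/2 : ℝ) ≠ ⊤ :=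
      ENNReal.mul_ne_top (ENNReal.mul_ne_top hCCne hRne)
        (ENNReal.rpow_lt_top_of_nonneg (by norm_num) hvolU.ne).ne
    refine le_trans hpb (le_trans
      (mul_le_mul_of_nonneg_left (ENNReal.toReal_mono hfin hle) (by positivity)) (le_of_eq ?_))
    rw [ENNReal.toReal_mul, ENNReal.toReal_mul]
    ring
  -- choose the approximating sequence
  choose Fs hFsB hFsA using fun n : ℕ => happrox ((1/2) ^ n) (by positivity)
  have hFsd : ∀ n, DifferentiableOn ℂ (Fs n) U := fun n => (hFsB n).1
  have hFsm : ∀ n, MemLp (Fs n) 2 (volume.restrict U) := fun n => (hFsB n).2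
  have hFsmR : ∀ n, MemLp (Fs n) 2 (volume.restrict R) := fun n =>
    (hFsm n).mono_measure (Measure.restrict_mono hRU le_rfl)
  have hgR : MemLp g 2 (volume.restrict R) := hg.2
  have hdiff : ∀ n m : ℕ, eLpNorm (Fs n - Fs m) 2 (volume.restrict R)
      ≤ ENNReal.ofReal ((1/2) ^ n) + ENNReal.ofReal ((1/2) ^ m) := by
    intro n m
    have heq : Fs n - Fs m = (g - Fs m) - (g - Fs n) := by
      funext z; simp only [Pi.sub_apply]; ring
    rw [heq]
    refine le_trans (eLpNorm_sub_le (hgR.sub (hFsmR m)).aestronglyMeasurable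
      (hgR.sub (hFsmR n)).aestronglyMeasurable one_le_two) ?_
    rw [add_comm (ENNReal.ofReal ((1/2) ^ n))]
    exact add_le_add (hFsA m).le (hFsA n).le
  have hdiffR : ∀ n m : ℕ, (eLpNorm (Fs n - Fs m) 2 (volume.restrict R)).toReal
      ≤ (1/2) ^ n + (1/2) ^ m := by
    intro n m
    refine ENNReal.toReal_le_of_le_ofReal (by positivity) ?_
    refine (hdiff n m).trans (le_of_eq ?_)
    rw [← ENNReal.ofReal_add (by positivity) (by positivity)]
  -- uniform Cauchy on compacts
  have hUCS : ∀ L : Set ℂ, IsCompact L → L ⊆ U → UniformCauchySeqOn Fs atTop L := by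
    intro L hL hLU
    obtain ⟨C, hC0, hC⟩ := compact_bound L hL hLU
    rw [Metric.uniformCauchySeqOn_iff]
    intro ε hε
    obtain ⟨N, hN⟩ : ∃ N : ℕ, (C + 1) * ((1/2) ^ N + (1/2) ^ N) < ε := by
      obtain ⟨N, hN⟩ := exists_pow_lt_of_lt_one
        (show (0:ℝ) < ε / (2 * (C + 1)) by positivity) (by norm_num : (1/2 : ℝ) < 1)
      refine ⟨N, ?_⟩
      have hC1 : (0:ℝ) < C + 1 := by linarith
      calc (C + 1) * ((1/2) ^ N + (1/2) ^ N) = (2 * (C + 1)) * (1/2) ^ N := by ring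
        _ < (2 * (C + 1)) * (ε / (2 * (C + 1))) := by
            exact mul_lt_mul_of_pos_left hN (by positivity)
        _ = ε := by field_simp
    refine ⟨N, fun m hm n hn x hx => ?_⟩
    rw [dist_eq_norm]
    have h1 := hC (Fs m - Fs n) ((hFsd m).sub (hFsd n)) ((hFsm m).sub (hFsm n)) x hx
    have h2 := hdiffR m n
    have h3 : ((1:ℝ)/2) ^ m ≤ (1/2) ^ N := pow_le_pow_of_le_one (by norm_num) (by norm_num) hm
    have h4 : ((1:ℝ)/2) ^ n ≤ (1/2) ^ N := pow_le_pow_of_le_one (by norm_num) (by norm_num) hn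
    calc ‖Fs m x - Fs n x‖ = ‖(Fs m - Fs n) x‖ := rfl
      _ ≤ C * (eLpNorm (Fs m - Fs n) 2 (volume.restrict R)).toReal := h1
      _ ≤ C * ((1/2) ^ m + (1/2) ^ n) := mul_le_mul_of_nonneg_left h2 hC0
      _ ≤ C * ((1/2) ^ N + (1/2) ^ N) :=
          mul_le_mul_of_nonneg_left (add_le_add h3 h4) hC0
      _ ≤ (C + 1) * ((1/2) ^ N + (1/2) ^ N) :=
          mul_le_mul_of_nonneg_right (by linarith) (by positivity)
      _ < ε := hN
  -- pointwise limit
  have hcau : ∀ z ∈ U, CauchySeq (fun n => Fs n z) := by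
    intro z hz
    have h := hUCS {z} isCompact_singleton (Set.singleton_subset_iff.mpr hz)
    rw [Metric.uniformCauchySeqOn_iff] at h
    rw [Metric.cauchySeq_iff]
    intro ε hε
    obtain ⟨N, hN⟩ := h ε hε
    exact ⟨N, fun m hm n hn => hN m hm n hn z rfl⟩
  set G : ℂ → ℂ := fun z => limUnder atTop (fun n => Fs n z) with hGdef
  have htend : ∀ z ∈ U, Filter.Tendsto (fun n => Fs n z) atTop (nhds (G z)) := by
    intro z hz
    obtain ⟨l, hl⟩ := cauchySeq_tendsto_of_complete (hcau z hz)
    have : G z = l := hl.limUnder_eq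
    rwa [this]
  have hTLU : TendstoLocallyUniformlyOn Fs G atTop U := by
    rw [tendstoLocallyUniformlyOn_iff_forall_isCompact hUopen]
    intro L hLU hL
    exact (hUCS L hL hLU).tendstoUniformlyOn_of_tendsto fun x hx => htend x (hLU hx)
  have hGd : DifferentiableOn ℂ G U :=
    hTLU.differentiableOn (Filter.Eventually.of_forall hFsd) hUopen
  -- G is in L²(U)
  have hGae : ∀ᵐ z ∂(volume.restrict U), Filter.Tendsto (fun n => Fs n z) atTop (nhds (G z)) :=
    (ae_restrict_mem hUopen.measurableSet).mono htend
  have hGasm : AEStronglyMeasurable G (volume.restrict U) :=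
    hGd.continuousOn.aestronglyMeasurable hUopen.measurableSet
  have hBnd : ∀ n, eLpNorm (Fs n) 2 (volume.restrict U)
      ≤ CC * (ENNReal.ofReal 1 + eLpNorm g 2 (volume.restrict R)) := by
    intro n
    refine (master (Fs n) (hFsd n) (hFsm n)).trans (mul_le_mul_right ?_ CC)
    have heq : Fs n = (Fs n - g) + g := by funext z; simp
    calc eLpNorm (Fs n) 2 (volume.restrict R)
        ≤ eLpNorm (Fs n - g) 2 (volume.restrict R) + eLpNorm g 2 (volume.restrict R) := by
          nth_rewrite 1 [heq]
          exact eLpNorm_add_le ((hFsmR n).sub hgR).aestronglyMeasurable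
            hgR.aestronglyMeasurable one_le_two
      _ ≤ ENNReal.ofReal 1 + eLpNorm g 2 (volume.restrict R) := by
          refine add_le_add_left ?_ _
          have : eLpNorm (Fs n - g) 2 (volume.restrict R)
              = eLpNorm (g - Fs n) 2 (volume.restrict R) := by
            rw [show Fs n - g = -(g - Fs n) by funext z; simp [Pi.sub_apply],
              eLpNorm_neg]
          rw [this]
          refine (hFsA n).le.trans (ENNReal.ofReal_le_ofReal ?_)
          exact pow_le_one₀ (by norm_num) (by norm_num)
  have hGfin : eLpNorm G 2 (volume.restrict U) < ⊤ := by
    have hlim := MeasureTheory.Lp.eLpNorm_lim_le_liminf_eLpNorm (p := 2) (fun n => (hFsm n).aestronglyMeasurable) G hGae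
    refine lt_of_le_of_lt hlim (lt_of_le_of_lt
      (Filter.liminf_le_of_frequently_le' (Filter.Frequently.of_forall hBnd)) ?_)
    refine ENNReal.mul_lt_top hCCne.lt_top ?_
    exact ENNReal.add_lt_top.mpr ⟨ENNReal.ofReal_lt_top, hgR.2⟩
  have hGmem : MemLp G 2 (volume.restrict U) := ⟨hGasm, hGfin⟩
  have hGasmR : AEStronglyMeasurable G (volume.restrict R) :=
    hGasm.mono_measure (Measure.restrict_mono hRU le_rfl)
  -- g = G a.e. on R
  have hGR0 : eLpNorm (g - G) 2 (volume.restrict R) = 0 := by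
    have hFat : ∀ n, eLpNorm (Fs n - G) 2 (volume.restrict R)
        ≤ Filter.atTop.liminf fun m => eLpNorm (Fs n - Fs m) 2 (volume.restrict R) := by
      intro n
      refine MeasureTheory.Lp.eLpNorm_lim_le_liminf_eLpNorm (p := 2)
        (fun m => ((hFsmR n).sub (hFsmR m)).aestronglyMeasurable) _ ?_
      refine (ae_restrict_mem hRopen.measurableSet).mono fun z hz => ?_
      exact Filter.Tendsto.const_sub _ (htend z (hRU hz))
    have hliminf : ∀ n, (Filter.atTop.liminf fun m => eLpNorm (Fs n - Fs m) 2 (volume.restrict R))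
        ≤ ENNReal.ofReal ((1/2) ^ n) := by
      intro n
      have hmono := Filter.liminf_le_liminf (Filter.Eventually.of_forall (hdiff n))
        (f := atTop)
      refine hmono.trans (le_of_eq ?_)
      have htend0 : Filter.Tendsto
          (fun m : ℕ => ENNReal.ofReal ((1/2) ^ n) + ENNReal.ofReal ((1/2 : ℝ) ^ m)) atTop
          (nhds (ENNReal.ofReal ((1/2) ^ n) + 0)) := by
        refine Filter.Tendsto.const_add _ ?_
        rw [← ENNReal.ofReal_zero]
        exact ENNReal.tendsto_ofReal
          (tendsto_pow_atTop_nhds_zero_of_lt_one (by norm_num) (by norm_num))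
      rw [htend0.liminf_eq, add_zero]
    have hbound : ∀ n : ℕ, eLpNorm (g - G) 2 (volume.restrict R)
        ≤ ENNReal.ofReal ((1/2) ^ n) + ENNReal.ofReal ((1/2) ^ n) := by
      intro n
      have heq : g - G = (g - Fs n) + (Fs n - G) := by
        funext z; simp only [Pi.sub_apply, Pi.add_apply]; ring
      calc eLpNorm (g - G) 2 (volume.restrict R)
          ≤ eLpNorm (g - Fs n) 2 (volume.restrict R)
            + eLpNorm (Fs n - G) 2 (volume.restrict R) := by
            rw [heq]
            exact eLpNorm_add_le (hgR.sub (hFsmR n)).aestronglyMeasurable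
              ((hFsmR n).aestronglyMeasurable.sub hGasmR) one_le_two
        _ ≤ ENNReal.ofReal ((1/2) ^ n) + ENNReal.ofReal ((1/2) ^ n) :=
            add_le_add (hFsA n).le ((hFat n).trans (hliminf n))
    have htend0 : Filter.Tendsto
        (fun n : ℕ => ENNReal.ofReal ((1/2 : ℝ) ^ n) + ENNReal.ofReal ((1/2 : ℝ) ^ n)) atTop
        (nhds 0) := by
      rw [show (0 : ENNReal) = 0 + 0 by simp]
      have h0 : Filter.Tendsto (fun n : ℕ => ENNReal.ofReal ((1/2 : ℝ) ^ n)) atTop (nhds 0) := by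
        rw [← ENNReal.ofReal_zero]
        exact ENNReal.tendsto_ofReal
          (tendsto_pow_atTop_nhds_zero_of_lt_one (by norm_num) (by norm_num))
      exact h0.add h0
    have : eLpNorm (g - G) 2 (volume.restrict R) ≤ 0 :=
      ge_of_tendsto htend0 (Filter.Eventually.of_forall hbound)
    exact le_antisymm this zero_le
  have haeeq : g =ᵐ[volume.restrict R] G := by
    have h0 := (eLpNorm_eq_zero_iff (hgR.sub ⟨hGasmR,
      lt_of_le_of_lt (eLpNorm_mono_measure G (Measure.restrict_mono hRU le_rfl)) hGfin⟩
      ).aestronglyMeasurable two_ne_zero).mp hGR0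
    filter_upwards [h0] with z hz
    have hz' : g z - G z = 0 := hz
    exact sub_eq_zero.mp hz'
  have hEq : Set.EqOn g G R :=
    MeasureTheory.Measure.eqOn_of_ae_eq haeeq hg.1.continuousOn
      (hGd.continuousOn.mono hRU) (by rw [hRopen.interior_eq]; exact subset_closure)
  exact ⟨G, ⟨hGd, hGmem⟩, hEq⟩

end
end

section
/- Let H₁, H₂ be Hilbert spaces and A_i ⊂ H_i closed subspaces with orthogonal complements A_i^⊥. In the Hilbert tensor product H₁ ⊗̂ H₂, the sum (A₁ ⊗̂ H₂) + (H₁ ⊗̂ A₂) equals the orthogonal complement of A₁^⊥ ⊗̂ A₂^⊥; in particular this sum is a closed subspace of H₁ ⊗̂ H₂. -/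
open MeasureTheory Complex Set

noncomputable section

variable {H₁ H₂ H : Type*}
  [NormedAddCommGroup H₁] [InnerProductSpace ℂ H₁] [CompleteSpace H₁]
  [NormedAddCommGroup H₂] [InnerProductSpace ℂ H₂] [CompleteSpace H₂]
  [NormedAddCommGroup H] [InnerProductSpace ℂ H] [CompleteSpace H]

/-- The closed subspace `A ⊗̂ B` of a realized Hilbert tensor product: the closure of the
span of elementary tensors `tmul a b` with `a ∈ A`, `b ∈ B`. -/
def mulSpan (tmul : H₁ →ₗ[ℂ] H₂ →ₗ[ℂ] H) (A : Submodule ℂ H₁) (B : Submodule ℂ H₂) :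
    Submodule ℂ H :=
  (Submodule.span ℂ {x : H | ∃ a ∈ A, ∃ b ∈ B, x = tmul a b}).topologicalClosure

section Aux

variable (tmul : H₁ →ₗ[ℂ] H₂ →ₗ[ℂ] H)

lemma mem_mulSpan_of_tmul {A : Submodule ℂ H₁} {B : Submodule ℂ H₂} {a : H₁} {b : H₂}
    (ha : a ∈ A) (hb : b ∈ B) : tmul a b ∈ mulSpan tmul A B :=
  Submodule.le_topologicalClosure _ (Submodule.subset_span ⟨a, ha, b, hb, rfl⟩)

lemma mulSpan_mono {A A' : Submodule ℂ H₁} {B B' : Submodule ℂ H₂}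
    (hA : A ≤ A') (hB : B ≤ B') : mulSpan tmul A B ≤ mulSpan tmul A' B' := by
  apply Submodule.topologicalClosure_mono
  apply Submodule.span_mono
  rintro x ⟨a, ha, b, hb, rfl⟩
  exact ⟨a, hA ha, b, hB hb, rfl⟩

lemma mulSpan_isOrtho
    (hinner : ∀ (a c : H₁) (b d : H₂),
      (inner ℂ (tmul a b) (tmul c d) : ℂ) = (inner ℂ a c : ℂ) * (inner ℂ b d : ℂ))
    {B₁ C₁ : Submodule ℂ H₁} {B₂ C₂ : Submodule ℂ H₂}
    (h : ∀ a ∈ B₁, ∀ b ∈ B₂, ∀ c ∈ C₁, ∀ d ∈ C₂, (inner ℂ a c : ℂ) * (inner ℂ b d : ℂ) = 0) :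
    mulSpan tmul B₁ B₂ ⟂ mulSpan tmul C₁ C₂ := by
  have h0 : Submodule.span ℂ {x : H | ∃ a ∈ B₁, ∃ b ∈ B₂, x = tmul a b} ⟂
      Submodule.span ℂ {x : H | ∃ c ∈ C₁, ∃ d ∈ C₂, x = tmul c d} := by
    rw [Submodule.isOrtho_span]
    rintro u ⟨a, ha, b, hb, rfl⟩ v ⟨c, hc, d, hd, rfl⟩
    rw [hinner]
    exact h a ha b hb c hc d hd
  have h1 : mulSpan tmul B₁ B₂ ⟂
      Submodule.span ℂ {x : H | ∃ c ∈ C₁, ∃ d ∈ C₂, x = tmul c d} :=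
    Submodule.topologicalClosure_minimal _ h0 (Submodule.isClosed_orthogonal _)
  have h2 : mulSpan tmul C₁ C₂ ⟂ mulSpan tmul B₁ B₂ :=
    Submodule.topologicalClosure_minimal _ h1.symm (Submodule.isClosed_orthogonal _)
  exact h2.symm

lemma mulSpan_dense_aux (hdense : mulSpan tmul ⊤ ⊤ = ⊤)
    (A₁ : Submodule ℂ H₁) (A₂ : Submodule ℂ H₂)
    (h₁ : IsClosed (A₁ : Set H₁)) (h₂ : IsClosed (A₂ : Set H₂))
    (D : Submodule ℂ H) (hD : IsClosed (D : Set H))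
    (h11 : mulSpan tmul A₁ A₂ ≤ D) (h12 : mulSpan tmul A₁ A₂ᗮ ≤ D)
    (h21 : mulSpan tmul A₁ᗮ A₂ ≤ D) (h22 : mulSpan tmul A₁ᗮ A₂ᗮ ≤ D) : D = ⊤ := by
  haveI : CompleteSpace A₁ := h₁.completeSpace_coe
  haveI : CompleteSpace A₂ := h₂.completeSpace_coe
  have hle : mulSpan tmul ⊤ ⊤ ≤ D := by
    refine Submodule.topologicalClosure_minimal _ ?_ hD
    rw [Submodule.span_le]
    rintro x ⟨a, -, b, -, rfl⟩
    have hpa : (Submodule.orthogonalProjectionOnto A₁ a : H₁) ∈ A₁ := SetLike.coe_mem _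
    have hpa' : a - (Submodule.orthogonalProjectionOnto A₁ a : H₁) ∈ A₁ᗮ :=
      Submodule.sub_starProjection_mem_orthogonal a
    have hpb : (Submodule.orthogonalProjectionOnto A₂ b : H₂) ∈ A₂ := SetLike.coe_mem _
    have hpb' : b - (Submodule.orthogonalProjectionOnto A₂ b : H₂) ∈ A₂ᗮ :=
      Submodule.sub_starProjection_mem_orthogonal b
    have e1 : (Submodule.orthogonalProjectionOnto A₁ a : H₁) + (a - (Submodule.orthogonalProjectionOnto A₁ a : H₁)) = a := by
      abel
    have e2 : (Submodule.orthogonalProjectionOnto A₂ b : H₂) + (b - (Submodule.orthogonalProjectionOnto A₂ b : H₂)) = b := by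
      abel
    have hdecomp : tmul a b =
        tmul ((Submodule.orthogonalProjectionOnto A₁ a : H₁) + (a - (Submodule.orthogonalProjectionOnto A₁ a : H₁)))
          ((Submodule.orthogonalProjectionOnto A₂ b : H₂) + (b - (Submodule.orthogonalProjectionOnto A₂ b : H₂))) := by
      rw [e1, e2]
    have key : ∀ (u u' : H₁) (v v' : H₂), tmul (u + u') (v + v') =
        tmul u v + tmul u v' + tmul u' v + tmul u' v' := by
      intro u u' v v'
      simp only [map_add, LinearMap.add_apply]
      abel
    rw [hdecomp, key]
    refine D.add_mem (D.add_mem (D.add_mem ?_ ?_) ?_) ?_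
    · exact h11 (mem_mulSpan_of_tmul tmul hpa hpb)
    · exact h12 (mem_mulSpan_of_tmul tmul hpa hpb')
    · exact h21 (mem_mulSpan_of_tmul tmul hpa' hpb)
    · exact h22 (mem_mulSpan_of_tmul tmul hpa' hpb')
  rw [hdense] at hle
  exact top_le_iff.mp hle

end Aux

/-- Let `H` realize the Hilbert tensor product `H₁ ⊗̂ H₂` via a bilinear map
`tmul` with `⟪a⊗b, c⊗d⟫ = ⟪a,c⟫·⟪b,d⟫` and dense span of elementary tensors. For closed
subspaces `A₁ ⊆ H₁`, `A₂ ⊆ H₂`, the sum `(A₁ ⊗̂ H₂) + (H₁ ⊗̂ A₂)` equals the orthogonal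
complement of `A₁ᗮ ⊗̂ A₂ᗮ`; in particular this sum is closed. -/
theorem statement9 (tmul : H₁ →ₗ[ℂ] H₂ →ₗ[ℂ] H)
    (hinner : ∀ (a c : H₁) (b d : H₂),
      (inner ℂ (tmul a b) (tmul c d) : ℂ) = (inner ℂ a c : ℂ) * (inner ℂ b d : ℂ))
    (hdense : mulSpan tmul ⊤ ⊤ = ⊤)
    (A₁ : Submodule ℂ H₁) (A₂ : Submodule ℂ H₂)
    (h₁ : IsClosed (A₁ : Set H₁)) (h₂ : IsClosed (A₂ : Set H₂)) :
    {x : H | ∃ a ∈ mulSpan tmul A₁ ⊤, ∃ b ∈ mulSpan tmul ⊤ A₂, x = a + b} =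
      ↑((mulSpan tmul A₁ᗮ A₂ᗮ)ᗮ) ∧
    IsClosed {x : H | ∃ a ∈ mulSpan tmul A₁ ⊤, ∃ b ∈ mulSpan tmul ⊤ A₂, x = a + b} := by
  -- Orthogonality relations between the four corner subspaces.
  have oM1K : mulSpan tmul A₁ ⊤ ⟂ mulSpan tmul A₁ᗮ A₂ᗮ := by
    refine mulSpan_isOrtho tmul hinner fun a ha b hb c hc d hd => ?_
    rw [(A₁.mem_orthogonal c).mp hc a ha, zero_mul]
  have oM2K : mulSpan tmul ⊤ A₂ ⟂ mulSpan tmul A₁ᗮ A₂ᗮ := by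
    refine mulSpan_isOrtho tmul hinner fun a ha b hb c hc d hd => ?_
    rw [(A₂.mem_orthogonal d).mp hd b hb, mul_zero]
  have o2111 : mulSpan tmul A₁ᗮ A₂ ⟂ mulSpan tmul A₁ A₂ := by
    refine mulSpan_isOrtho tmul hinner fun a ha b hb c hc d hd => ?_
    rw [(A₁.mem_orthogonal' a).mp ha c hc, zero_mul]
  have o2112 : mulSpan tmul A₁ᗮ A₂ ⟂ mulSpan tmul A₁ A₂ᗮ := by
    refine mulSpan_isOrtho tmul hinner fun a ha b hb c hc d hd => ?_
    rw [(A₁.mem_orthogonal' a).mp ha c hc, zero_mul]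
  have o2122 : mulSpan tmul A₁ᗮ A₂ ⟂ mulSpan tmul A₁ᗮ A₂ᗮ := by
    refine mulSpan_isOrtho tmul hinner fun a ha b hb c hc d hd => ?_
    rw [(A₂.mem_orthogonal d).mp hd b hb, mul_zero]
  have hset : {x : H | ∃ a ∈ mulSpan tmul A₁ ⊤, ∃ b ∈ mulSpan tmul ⊤ A₂, x = a + b} =
      ↑((mulSpan tmul A₁ᗮ A₂ᗮ)ᗮ) := by
    ext x
    simp only [Set.mem_setOf_eq, SetLike.mem_coe]
    constructor
    · rintro ⟨a, ha, b, hb, rfl⟩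
      exact Submodule.add_mem _ (oM1K.le ha) (oM2K.le hb)
    · intro hx
      haveI : CompleteSpace (mulSpan tmul A₁ ⊤) :=
        (Submodule.isClosed_topologicalClosure _).completeSpace_coe
      haveI : CompleteSpace (mulSpan tmul A₁ᗮ A₂) :=
        (Submodule.isClosed_topologicalClosure _).completeSpace_coe
      set a : H := (Submodule.orthogonalProjectionOnto (mulSpan tmul A₁ ⊤) x : H) with ha_def
      have ha : a ∈ mulSpan tmul A₁ ⊤ := SetLike.coe_mem _
      have hb1 : x - a ∈ (mulSpan tmul A₁ ⊤)ᗮ := Submodule.sub_starProjection_mem_orthogonal x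
      have hbK : x - a ∈ (mulSpan tmul A₁ᗮ A₂ᗮ)ᗮ := Submodule.sub_mem _ hx (oM1K.le ha)
      set c : H := (Submodule.orthogonalProjectionOnto (mulSpan tmul A₁ᗮ A₂) (x - a) : H) with hc_def
      have hc : c ∈ mulSpan tmul A₁ᗮ A₂ := SetLike.coe_mem _
      have hw21 : (x - a) - c ∈ (mulSpan tmul A₁ᗮ A₂)ᗮ :=
        Submodule.sub_starProjection_mem_orthogonal (x - a)
      -- the remainder is orthogonal to all four corners, hence zero
      have hzero : (x - a) - c = 0 := by
        have hw11 : (x - a) - c ∈ (mulSpan tmul A₁ A₂)ᗮ :=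
          Submodule.sub_mem _
            (Submodule.orthogonal_le (mulSpan_mono tmul le_rfl le_top) hb1) (o2111.le hc)
        have hw12 : (x - a) - c ∈ (mulSpan tmul A₁ A₂ᗮ)ᗮ :=
          Submodule.sub_mem _
            (Submodule.orthogonal_le (mulSpan_mono tmul le_rfl le_top) hb1) (o2112.le hc)
        have hw22 : (x - a) - c ∈ (mulSpan tmul A₁ᗮ A₂ᗮ)ᗮ :=
          Submodule.sub_mem _ hbK (o2122.le hc)
        have hD : (ℂ ∙ ((x - a) - c))ᗮ = ⊤ := by
          refine mulSpan_dense_aux tmul hdense A₁ A₂ h₁ h₂ _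
            (Submodule.isClosed_orthogonal _) ?_ ?_ ?_ ?_ <;>
          · intro v hv
            rw [Submodule.mem_orthogonal_singleton_iff_inner_left]
            first
            | exact (Submodule.mem_orthogonal _ _).mp hw11 v hv
            | exact (Submodule.mem_orthogonal _ _).mp hw12 v hv
            | exact (Submodule.mem_orthogonal _ _).mp hw21 v hv
            | exact (Submodule.mem_orthogonal _ _).mp hw22 v hv
        have hmem : (x - a) - c ∈ (ℂ ∙ ((x - a) - c))ᗮ := by
          rw [hD]; exact Submodule.mem_top
        exact inner_self_eq_zero.mp
          (Submodule.mem_orthogonal_singleton_iff_inner_left.mp hmem)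
      have hbc : x - a = c := sub_eq_zero.mp hzero
      refine ⟨a, ha, x - a, ?_, by abel⟩
      rw [hbc]
      exact mulSpan_mono tmul le_top le_rfl hc
  exact ⟨hset, hset ▸ Submodule.isClosed_orthogonal _⟩
end
end
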